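/- arXiv:1703.06342 — 7 statements merged into one kernel-verified Lean document; each statement's English description precedes it below -/
import Mathlib

section
/- An integer n with n ≡ T (mod 2) has a representation n = a₀² + a₁² + a₂² + a₃² with integers a₀,a₁,a₂,a₃ satisfying a₀ + a₁ + a₂ + a₃ = T if and only if 4n − T² is a sum of three integer squares. -/
private lemma key8 : ∀ t a b c : ZMod 8, t^2+a^2+b^2+c^2 = 4*t →
    (((t+a+b+c = 0 ∨ t+a+b+c = 4) ∧ (t+a-b-c = 0 ∨ t+a-b-c = 4) ∧
      (t-a+b-c = 0 ∨ t-a+b-c = 4) ∧ (t-a-b+c = 0 ∨ t-a-b+c = 4)) ∨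
     ((t-a+b+c = 0 ∨ t-a+b+c = 4) ∧ (t-a-b-c = 0 ∨ t-a-b-c = 4) ∧
      (t+a+b-c = 0 ∨ t+a+b-c = 4) ∧ (t+a-b+c = 0 ∨ t+a-b+c = 4))) := by
  decide

private lemma div4 (k : ℤ) (h : ((k : ZMod 8) = 0 ∨ (k : ZMod 8) = 4)) : (4:ℤ) ∣ k := by
  rcases h with h | h
  · have := (ZMod.intCast_zmod_eq_zero_iff_dvd k 8).mp h
    omega
  · have : ((k - 4 : ℤ) : ZMod 8) = 0 := by push_cast [h]; ring
    have := (ZMod.intCast_zmod_eq_zero_iff_dvd (k-4) 8).mp this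
    omega

theorem stmt_0 (n T : ℤ) (hpar : n ≡ T [ZMOD 2]) :
    (∃ a₀ a₁ a₂ a₃ : ℤ, a₀^2 + a₁^2 + a₂^2 + a₃^2 = n ∧ a₀ + a₁ + a₂ + a₃ = T) ↔
    (∃ x y z : ℤ, 4 * n - T^2 = x^2 + y^2 + z^2) := by
  constructor
  · rintro ⟨a₀, a₁, a₂, a₃, h1, h2⟩
    exact ⟨a₀+a₁-a₂-a₃, a₀-a₁+a₂-a₃, a₀-a₁-a₂+a₃,
      by linear_combination -4*h1 + (a₀+a₁+a₂+a₃+T)*h2⟩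
  · rintro ⟨x, y, z, hxyz⟩
    obtain ⟨j, hj⟩ : (2:ℤ) ∣ n - T := Int.ModEq.dvd hpar.symm
    have h8 : (T:ZMod 8)^2+(x:ZMod 8)^2+(y:ZMod 8)^2+(z:ZMod 8)^2 = 4*(T:ZMod 8) := by
      have : ((T^2+x^2+y^2+z^2 : ℤ) : ZMod 8) = ((4*T + 8*j : ℤ) : ZMod 8) := by
        congr 1; linarith
      push_cast at this
      have h80 : (8 : ZMod 8) = 0 := rfl
      linear_combination this + (j : ZMod 8) * h80
    rcases key8 (T:ZMod 8) (x:ZMod 8) (y:ZMod 8) (z:ZMod 8) h8 with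
      ⟨c0, c1, c2, c3⟩ | ⟨c0, c1, c2, c3⟩
    · obtain ⟨k₀, e0⟩ := div4 (T+x+y+z) (by push_cast; tauto)
      obtain ⟨k₁, e1⟩ := div4 (T+x-y-z) (by push_cast; tauto)
      obtain ⟨k₂, e2⟩ := div4 (T-x+y-z) (by push_cast; tauto)
      obtain ⟨k₃, e3⟩ := div4 (T-x-y+z) (by push_cast; tauto)
      refine ⟨k₀, k₁, k₂, k₃, ?_, ?_⟩
      · have h16 : 16*(k₀^2+k₁^2+k₂^2+k₃^2) = 16*n := by
          linear_combination -(T+x+y+z+4*k₀)*e0 - (T+x-y-z+4*k₁)*e1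
            - (T-x+y-z+4*k₂)*e2 - (T-x-y+z+4*k₃)*e3 - 4*hxyz
        linarith
      · have h4 : 4*(k₀+k₁+k₂+k₃) = 4*T := by linear_combination -(e0+e1+e2+e3)
        linarith
    · obtain ⟨k₀, e0⟩ := div4 (T-x+y+z) (by push_cast; tauto)
      obtain ⟨k₁, e1⟩ := div4 (T-x-y-z) (by push_cast; tauto)
      obtain ⟨k₂, e2⟩ := div4 (T+x+y-z) (by push_cast; tauto)
      obtain ⟨k₃, e3⟩ := div4 (T+x-y+z) (by push_cast; tauto)
      refine ⟨k₀, k₁, k₂, k₃, ?_, ?_⟩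
      · have h16 : 16*(k₀^2+k₁^2+k₂^2+k₃^2) = 16*n := by
          linear_combination -(T-x+y+z+4*k₀)*e0 - (T-x-y-z+4*k₁)*e1
            - (T+x+y-z+4*k₂)*e2 - (T+x-y+z+4*k₃)*e3 - 4*hxyz
        linarith
      · have h4 : 4*(k₀+k₁+k₂+k₃) = 4*T := by linear_combination -(e0+e1+e2+e3)
        linarith
end

section
/- For every α in the Lipschitz order R and β = α(1 − i − j − k), the norm of β is congruent to 4 times the real part of β modulo 8. -/
open Quaternion

def oneMinusIJK : ℍ[ℤ] := ⟨1, -1, -1, -1⟩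

/-! The norm is multiplicative and `N(1 - i - j - k) = 4`, so `N β = 4 N α`, while
`Re β = a + b + c + d` for `α = a + bi + cj + dk`. Dividing by 4, the claim becomes
`a² + b² + c² + d² ≡ a + b + c + d (mod 2)`, which holds termwise since `x² ≡ x (mod 2)`. -/

theorem Int.sq_modEq_self_two (x : ℤ) : x ^ 2 ≡ x [ZMOD 2] := by
  refine (Int.modEq_iff_dvd.mpr ?_).symm
  simpa [sq, mul_sub, even_iff_two_dvd] using Int.even_mul_pred_self x

theorem Quaternion.normSq_modEq_two (a : ℍ[ℤ]) :
    normSq a ≡ a.re + a.imI + a.imJ + a.imK [ZMOD 2] := by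
  rw [normSq_def']
  exact ((a.re.sq_modEq_self_two.add a.imI.sq_modEq_self_two).add
    a.imJ.sq_modEq_self_two).add a.imK.sq_modEq_self_two

theorem normSq_oneMinusIJK : normSq oneMinusIJK = 4 :=
  rfl

theorem re_mul_oneMinusIJK (a : ℍ[ℤ]) :
    (a * oneMinusIJK).re = a.re + a.imI + a.imJ + a.imK := by
  rw [re_mul]
  change a.re * 1 - a.imI * -1 - a.imJ * -1 - a.imK * -1 = _
  ring

theorem stmt_3 (α β : ℍ[ℤ]) (hβ : β = α * oneMinusIJK) :
    Quaternion.normSq β ≡ 4 * β.re [ZMOD 8] := by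
  subst hβ
  rw [map_mul, normSq_oneMinusIJK, re_mul_oneMinusIJK, mul_comm]
  exact α.normSq_modEq_two.mul_left' (c := 4)
end

section
/- A quaternion β = b₀ + b₁i + b₂j + b₃k in the Lipschitz order R lies in the right ideal R(1 − i − j − k) (i.e., β = α(1 − i − j − k) for some α ∈ R) if and only if for every index μ ∈ {0,1,2,3}, the sum of the three coefficients bᵥ with ν ≠ μ is congruent to bᵤ modulo 4. -/
/-!
Since `(1 - i - j - k) * (1 + i + j + k) = 4`, a quaternion `β` is a left multiple of
`1 - i - j - k` exactly when every coordinate of `β * (1 + i + j + k)` is divisible by `4`.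
With `S = b₀ + b₁ + b₂ + b₃` these coordinates are `-(S - 2b₀)`, `S - 2b₃`, `S - 2b₁`, `S - 2b₂`,
and `S ≡ 2bμ [ZMOD 4]` is the congruence of the statement.
-/

open Quaternion

namespace Quaternion

variable {R : Type*} [CommRing R]

theorem exists_mul_eq_iff_exists_mul_star_eq_smul [NoZeroDivisors R] {γ : ℍ[R]}
    (hγ : normSq γ ≠ 0) (β : ℍ[R]) :
    (∃ α, β = α * γ) ↔ ∃ α, β * star γ = normSq γ • α := by
  constructor
  · rintro ⟨α, rfl⟩
    exact ⟨α, by rw [mul_assoc, self_mul_star, mul_coe_eq_smul]⟩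
  · rintro ⟨α, h⟩
    refine ⟨α, smul_right_injective _ hγ ?_⟩
    calc normSq γ • β = β * star γ * γ := by rw [mul_assoc, star_mul_self, mul_coe_eq_smul]
      _ = normSq γ • (α * γ) := by rw [h, smul_mul_assoc]

theorem exists_eq_smul_iff_dvd (r : R) (x : ℍ[R]) :
    (∃ α, x = r • α) ↔ r ∣ x.re ∧ r ∣ x.imI ∧ r ∣ x.imJ ∧ r ∣ x.imK := by
  constructor
  · rintro ⟨α, rfl⟩
    simp only [re_smul, imI_smul, imJ_smul, imK_smul, smul_eq_mul]
    exact ⟨dvd_mul_right _ _, dvd_mul_right _ _, dvd_mul_right _ _, dvd_mul_right _ _⟩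
  · rintro ⟨⟨a₀, h₀⟩, ⟨a₁, h₁⟩, ⟨a₂, h₂⟩, ⟨a₃, h₃⟩⟩
    exact ⟨⟨a₀, a₁, a₂, a₃⟩, Quaternion.ext _ _ h₀ h₁ h₂ h₃⟩

end Quaternion

theorem exists_mul_oneMinusIJK_iff (β : ℍ[ℤ]) :
    (∃ α, β = α * oneMinusIJK) ↔
      (β.imI + β.imJ + β.imK ≡ β.re [ZMOD 4] ∧ β.re + β.imJ + β.imK ≡ β.imI [ZMOD 4] ∧
        β.re + β.imI + β.imK ≡ β.imJ [ZMOD 4] ∧ β.re + β.imI + β.imJ ≡ β.imK [ZMOD 4]) := by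
  have hnorm : normSq oneMinusIJK ≠ 0 := by rw [normSq_oneMinusIJK]; norm_num
  rw [exists_mul_eq_iff_exists_mul_star_eq_smul hnorm, normSq_oneMinusIJK, exists_eq_smul_iff_dvd]
  simp only [re_mul, imI_mul, imJ_mul, imK_mul, re_star, imI_star, imJ_star, imK_star, Int.ModEq]
  simp only [oneMinusIJK]
  omega

theorem stmt_4 (b₀ b₁ b₂ b₃ : ℤ) :
    (∃ α : ℍ[ℤ], (⟨b₀, b₁, b₂, b₃⟩ : ℍ[ℤ]) = α * oneMinusIJK) ↔
    (b₁ + b₂ + b₃ ≡ b₀ [ZMOD 4] ∧ b₀ + b₂ + b₃ ≡ b₁ [ZMOD 4] ∧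
     b₀ + b₁ + b₃ ≡ b₂ [ZMOD 4] ∧ b₀ + b₁ + b₂ ≡ b₃ [ZMOD 4]) :=
  exists_mul_oneMinusIJK_iff ⟨b₀, b₁, b₂, b₃⟩
end

section
/- If β = b₀ + b₁i + b₂j + b₃k is a Lipschitz quaternion satisfying N(β) ≡ 4·Re(β) (mod 8), then there exist signs εᵥ ∈ {±1} with ε₀ = 1 such that the quaternion β' = b₀ + ε₁b₁i + ε₂b₂j + ε₃b₃k lies in R(1 − i − j − k). -/
/-!
Since `(1 - i - j - k)(1 + i + j + k) = 4`, a Lipschitz quaternion `c` lies in `R(1 - i - j - k)`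
as soon as the four coordinates of `c(1 + i + j + k)` are divisible by `4`.
Reducing the hypothesis mod `4` shows that the `bᵥ` are all even or all odd.
If they are all even, `bᵥ = 2cᵥ`, the hypothesis mod `8` says that `∑ cᵥ² ≡ ∑ cᵥ` is even,
and the signs `εᵥ = 1` work. If they are all odd, choose `εᵥ` with `εᵥbᵥ ≡ -b₀ (mod 4)`.
-/

open Quaternion

lemma exists_eq_mul_oneMinusIJK_of_dvd {c₀ c₁ c₂ c₃ : ℤ}
    (h₀ : 4 ∣ c₀ - c₁ - c₂ - c₃) (h₁ : 4 ∣ c₀ + c₁ + c₂ - c₃)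
    (h₂ : 4 ∣ c₀ - c₁ + c₂ + c₃) (h₃ : 4 ∣ c₀ + c₁ - c₂ + c₃) :
    ∃ α : ℍ[ℤ], (⟨c₀, c₁, c₂, c₃⟩ : ℍ[ℤ]) = α * oneMinusIJK := by
  obtain ⟨a₀, ha₀⟩ := h₀
  obtain ⟨a₁, ha₁⟩ := h₁
  obtain ⟨a₂, ha₂⟩ := h₂
  obtain ⟨a₃, ha₃⟩ := h₃
  refine ⟨⟨a₀, a₁, a₂, a₃⟩, ?_⟩
  rw [oneMinusIJK]
  -- the literals are elaborated in `QuaternionAlgebra ℤ (-1) 0 (-1)`, not syntactically in `ℍ[ℤ]`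
  erw [QuaternionAlgebra.mk_mul_mk]
  ext <;> simp <;> linarith

lemma sq_emod_four (b : ℤ) : b ^ 2 % 4 = b % 2 := by
  rcases Int.even_or_odd b with ⟨c, rfl⟩ | hb
  · rw [show (c + c) ^ 2 = 4 * c ^ 2 by ring]
    omega
  · rw [Int.sq_mod_four_eq_one_of_odd hb, Int.odd_iff.mp hb]

lemma exists_sign_four_dvd_mul_add {a b : ℤ} (ha : a % 2 = 1) (hb : b % 2 = 1) :
    ∃ ε : ℤ, (ε = 1 ∨ ε = -1) ∧ 4 ∣ ε * a + b := by
  by_cases h : 4 ∣ a + b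
  · exact ⟨1, .inl rfl, by rwa [one_mul]⟩
  · exact ⟨-1, .inr rfl, by omega⟩

lemma emod_two_eq_of_four_dvd_sum_sq {b₀ b₁ b₂ b₃ : ℤ}
    (h : 4 ∣ b₀ ^ 2 + b₁ ^ 2 + b₂ ^ 2 + b₃ ^ 2) :
    b₁ % 2 = b₀ % 2 ∧ b₂ % 2 = b₀ % 2 ∧ b₃ % 2 = b₀ % 2 := by
  have := sq_emod_four b₀
  have := sq_emod_four b₁
  have := sq_emod_four b₂
  have := sq_emod_four b₃
  omega

lemma exists_signs_four_dvd {b₀ b₁ b₂ b₃ : ℤ}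
    (h : b₀ ^ 2 + b₁ ^ 2 + b₂ ^ 2 + b₃ ^ 2 ≡ 4 * b₀ [ZMOD 8]) :
    ∃ ε₁ ε₂ ε₃ : ℤ, (ε₁ = 1 ∨ ε₁ = -1) ∧ (ε₂ = 1 ∨ ε₂ = -1) ∧ (ε₃ = 1 ∨ ε₃ = -1) ∧
      4 ∣ b₀ - ε₁ * b₁ - ε₂ * b₂ - ε₃ * b₃ ∧ 4 ∣ b₀ + ε₁ * b₁ + ε₂ * b₂ - ε₃ * b₃ ∧
      4 ∣ b₀ - ε₁ * b₁ + ε₂ * b₂ + ε₃ * b₃ ∧ 4 ∣ b₀ + ε₁ * b₁ - ε₂ * b₂ + ε₃ * b₃ := by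
  have h4 : 4 ∣ b₀ ^ 2 + b₁ ^ 2 + b₂ ^ 2 + b₃ ^ 2 :=
    Int.modEq_zero_iff_dvd.mp <| (h.of_mul_right 2).trans <|
      Int.modEq_zero_iff_dvd.mpr (dvd_mul_right 4 b₀)
  obtain ⟨p₁, p₂, p₃⟩ := emod_two_eq_of_four_dvd_sum_sq h4
  rcases Int.emod_two_eq b₀ with even | odd
  · refine ⟨1, 1, 1, .inl rfl, .inl rfl, .inl rfl, ?_⟩
    obtain ⟨c₀, rfl⟩ : 2 ∣ b₀ := by omega
    obtain ⟨c₁, rfl⟩ : 2 ∣ b₁ := by omega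
    obtain ⟨c₂, rfl⟩ : 2 ∣ b₂ := by omega
    obtain ⟨c₃, rfl⟩ : 2 ∣ b₃ := by omega
    have h8 : 8 ∣ 4 * (c₀ ^ 2 + c₁ ^ 2 + c₂ ^ 2 + c₃ ^ 2 - 2 * c₀) := by
      convert h.symm.dvd using 1
      ring
    have := sq_emod_four c₀
    have := sq_emod_four c₁
    have := sq_emod_four c₂
    have := sq_emod_four c₃
    omega
  · obtain ⟨ε₁, h₁, d₁⟩ := exists_sign_four_dvd_mul_add (p₁.trans odd) odd
    obtain ⟨ε₂, h₂, d₂⟩ := exists_sign_four_dvd_mul_add (p₂.trans odd) odd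
    obtain ⟨ε₃, h₃, d₃⟩ := exists_sign_four_dvd_mul_add (p₃.trans odd) odd
    refine ⟨ε₁, ε₂, ε₃, h₁, h₂, h₃, ?_⟩
    generalize ε₁ * b₁ = c₁ at *
    generalize ε₂ * b₂ = c₂ at *
    generalize ε₃ * b₃ = c₃ at *
    omega

theorem stmt_7 (b₀ b₁ b₂ b₃ : ℤ)
    (h : b₀^2 + b₁^2 + b₂^2 + b₃^2 ≡ 4 * b₀ [ZMOD 8]) :
    ∃ ε₁ ε₂ ε₃ : ℤ, (ε₁ = 1 ∨ ε₁ = -1) ∧ (ε₂ = 1 ∨ ε₂ = -1) ∧ (ε₃ = 1 ∨ ε₃ = -1) ∧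
      ∃ α : ℍ[ℤ], (⟨b₀, ε₁ * b₁, ε₂ * b₂, ε₃ * b₃⟩ : ℍ[ℤ]) = α * oneMinusIJK := by
  obtain ⟨ε₁, ε₂, ε₃, h₁, h₂, h₃, d₀, d₁, d₂, d₃⟩ := exists_signs_four_dvd h
  exact ⟨ε₁, ε₂, ε₃, h₁, h₂, h₃, exists_eq_mul_oneMinusIJK_of_dvd d₀ d₁ d₂ d₃⟩
end

section
/- For integers n and T with n ≡ T (mod 2), there exist integers a₀,a₁,a₂,a₃ with Σaᵥ² = n and Σaᵥ = T if and only if there exist integers b₁,b₂,b₃ with T² + b₁² + b₂² + b₃² = 4n and T² + b₁² + b₂² + b₃² ≡ 4T (mod 8). -/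
lemma sq8 (x : ℤ) : (x % 4 = 0 ∧ x^2 % 8 = 0) ∨ (x % 4 = 1 ∧ x^2 % 8 = 1) ∨
    (x % 4 = 2 ∧ x^2 % 8 = 4) ∨ (x % 4 = 3 ∧ x^2 % 8 = 1) := by
  have hx : x = 4*(x/4) + x%4 := by omega
  have hx2 : x^2 = 16*(x/4)^2 + 8*((x/4)*(x%4)) + (x%4)^2 := by
    conv_lhs => rw [hx]
    ring
  have hr : x % 4 = 0 ∨ x % 4 = 1 ∨ x % 4 = 2 ∨ x % 4 = 3 := by omega
  rcases hr with h|h|h|h <;> rw [h] at hx2 <;> norm_num at hx2 <;> omega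

lemma key8_s8 (T b₁ b₂ b₃ : ℤ)
    (h8 : (T^2 + b₁^2 + b₂^2 + b₃^2) % 8 = (4*T) % 8) :
    (4 ∣ T+b₁+b₂+b₃ ∧ 4 ∣ T+b₁-b₂-b₃ ∧ 4 ∣ T-b₁+b₂-b₃ ∧ 4 ∣ T-b₁-b₂+b₃) ∨
    (4 ∣ T-b₁+b₂+b₃ ∧ 4 ∣ T-b₁-b₂-b₃ ∧ 4 ∣ T+b₁+b₂-b₃ ∧ 4 ∣ T+b₁-b₂+b₃) := by
  rcases sq8 T with ⟨h1,h1'⟩|⟨h1,h1'⟩|⟨h1,h1'⟩|⟨h1,h1'⟩ <;>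
  rcases sq8 b₁ with ⟨h2,h2'⟩|⟨h2,h2'⟩|⟨h2,h2'⟩|⟨h2,h2'⟩ <;>
  rcases sq8 b₂ with ⟨h3,h3'⟩|⟨h3,h3'⟩|⟨h3,h3'⟩|⟨h3,h3'⟩ <;>
  rcases sq8 b₃ with ⟨h4,h4'⟩|⟨h4,h4'⟩|⟨h4,h4'⟩|⟨h4,h4'⟩ <;>
  omega

theorem stmt_8 (n T : ℤ) (hpar : n ≡ T [ZMOD 2]) :
    (∃ a₀ a₁ a₂ a₃ : ℤ, a₀^2 + a₁^2 + a₂^2 + a₃^2 = n ∧ a₀ + a₁ + a₂ + a₃ = T) ↔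
    (∃ b₁ b₂ b₃ : ℤ, T^2 + b₁^2 + b₂^2 + b₃^2 = 4 * n ∧
      T^2 + b₁^2 + b₂^2 + b₃^2 ≡ 4 * T [ZMOD 8]) := by
  have hn2 : n % 2 = T % 2 := hpar
  constructor
  · rintro ⟨a₀, a₁, a₂, a₃, hsq, hsum⟩
    refine ⟨a₀+a₁-a₂-a₃, a₀-a₁+a₂-a₃, a₀-a₁-a₂+a₃, ?_, ?_⟩
    · linear_combination 4*hsq - (T + a₀+a₁+a₂+a₃)*hsum
    · have h4n : T^2 + (a₀+a₁-a₂-a₃)^2 + (a₀-a₁+a₂-a₃)^2 + (a₀-a₁-a₂+a₃)^2 = 4*n := by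
        linear_combination 4*hsq - (T + a₀+a₁+a₂+a₃)*hsum
      show _ % 8 = _ % 8
      rw [h4n]; omega
  · rintro ⟨b₁, b₂, b₃, h4n, h8⟩
    have h8' : (T^2 + b₁^2 + b₂^2 + b₃^2) % 8 = (4*T) % 8 := h8
    rcases key8_s8 T b₁ b₂ b₃ h8' with ⟨⟨c₀,hc₀⟩,⟨c₁,hc₁⟩,⟨c₂,hc₂⟩,⟨c₃,hc₃⟩⟩ |
      ⟨⟨c₀,hc₀⟩,⟨c₁,hc₁⟩,⟨c₂,hc₂⟩,⟨c₃,hc₃⟩⟩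
    · refine ⟨c₀, c₁, c₂, c₃, ?_, by omega⟩
      have h16 : 16*(c₀^2 + c₁^2 + c₂^2 + c₃^2) = 16*n := by
        linear_combination 4*h4n - (T+b₁+b₂+b₃+4*c₀)*hc₀ - (T+b₁-b₂-b₃+4*c₁)*hc₁ -
          (T-b₁+b₂-b₃+4*c₂)*hc₂ - (T-b₁-b₂+b₃+4*c₃)*hc₃
      linarith
    · refine ⟨c₀, c₁, c₂, c₃, ?_, by omega⟩
      have h16 : 16*(c₀^2 + c₁^2 + c₂^2 + c₃^2) = 16*n := by
        linear_combination 4*h4n - (T-b₁+b₂+b₃+4*c₀)*hc₀ - (T-b₁-b₂-b₃+4*c₁)*hc₁ -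
          (T+b₁+b₂-b₃+4*c₂)*hc₂ - (T+b₁-b₂+b₃+4*c₃)*hc₃
      linarith
end

section
/- If 4n − T² is a sum of three integer squares and n ≡ T (mod 2), then n is a sum of four integer squares a₀² + a₁² + a₂² + a₃² with a₀ + a₁ + a₂ + a₃ = T. -/
lemma aux8 : ∀ n t x y z : ZMod 8, 4*n = 4*t → 4*n - t^2 = x^2+y^2+z^2 →
    (2*(t+x+y+z) = 0 ∨ 2*(t-x+y+z) = 0) ∧ 4*x = 4*t ∧ 4*y = 4*t ∧ 4*z = 4*t := by
  decide

theorem stmt_10 (n T : ℤ) (hpar : n ≡ T [ZMOD 2])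
    (h : ∃ x y z : ℤ, 4 * n - T^2 = x^2 + y^2 + z^2) :
    ∃ a₀ a₁ a₂ a₃ : ℤ, a₀^2 + a₁^2 + a₂^2 + a₃^2 = n ∧ a₀ + a₁ + a₂ + a₃ = T := by
  obtain ⟨x, y, z, hxyz⟩ := h
  have hdT : (2:ℤ) ∣ T - n := hpar.dvd
  have hp : 4*(n : ZMod 8) = 4*(T : ZMod 8) := by
    obtain ⟨m, hm⟩ := hdT
    have h1 : ((4*n - 4*T : ℤ) : ZMod 8) = 0 := by
      rw [ZMod.intCast_zmod_eq_zero_iff_dvd]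
      exact ⟨-m, by omega⟩
    push_cast at h1
    linear_combination h1
  have he : 4*(n : ZMod 8) - (T : ZMod 8)^2
      = (x : ZMod 8)^2 + (y : ZMod 8)^2 + (z : ZMod 8)^2 := by
    have := congrArg (fun a : ℤ => (a : ZMod 8)) hxyz
    push_cast at this
    linear_combination this
  obtain ⟨hor8, hx8, hy8, hz8⟩ := aux8 (n : ZMod 8) T x y z hp he
  -- parity facts
  have hxT : (2:ℤ) ∣ x - T := by
    have h1 : ((4*x - 4*T : ℤ) : ZMod 8) = 0 := by push_cast; linear_combination hx8
    rw [ZMod.intCast_zmod_eq_zero_iff_dvd] at h1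
    omega
  have hyT : (2:ℤ) ∣ y - T := by
    have h1 : ((4*y - 4*T : ℤ) : ZMod 8) = 0 := by push_cast; linear_combination hy8
    rw [ZMod.intCast_zmod_eq_zero_iff_dvd] at h1
    omega
  have hzT : (2:ℤ) ∣ z - T := by
    have h1 : ((4*z - 4*T : ℤ) : ZMod 8) = 0 := by push_cast; linear_combination hz8
    rw [ZMod.intCast_zmod_eq_zero_iff_dvd] at h1
    omega
  have hor : (4:ℤ) ∣ T + x + y + z ∨ (4:ℤ) ∣ T - x + y + z := by
    rcases hor8 with h8 | h8
    · left
      have h1 : ((2*(T + x + y + z) : ℤ) : ZMod 8) = 0 := by push_cast; linear_combination h8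
      rw [ZMod.intCast_zmod_eq_zero_iff_dvd] at h1
      omega
    · right
      have h1 : ((2*(T - x + y + z) : ℤ) : ZMod 8) = 0 := by push_cast; linear_combination h8
      rw [ZMod.intCast_zmod_eq_zero_iff_dvd] at h1
      omega
  -- choose the sign of x
  obtain ⟨x', hx2, hx'T, hd0⟩ : ∃ x' : ℤ, x'^2 = x^2 ∧ (2:ℤ) ∣ x' - T ∧ (4:ℤ) ∣ T + x' + y + z := by
    rcases hor with hd | hd
    · exact ⟨x, rfl, hxT, hd⟩
    · exact ⟨-x, by ring, by omega, by omega⟩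
  -- all four numerators are divisible by 4
  have hd1 : (4:ℤ) ∣ T + x' - y - z := by omega
  have hd2 : (4:ℤ) ∣ T - x' + y - z := by omega
  have hd3 : (4:ℤ) ∣ T - x' - y + z := by omega
  obtain ⟨k₀, hk₀⟩ := hd0
  obtain ⟨k₁, hk₁⟩ := hd1
  obtain ⟨k₂, hk₂⟩ := hd2
  obtain ⟨k₃, hk₃⟩ := hd3
  refine ⟨k₀, k₁, k₂, k₃, ?_, ?_⟩
  · have h16 : 16*(k₀^2 + k₁^2 + k₂^2 + k₃^2) = 16*n := by
      linear_combination (-(T+x'+y+z) - 4*k₀)*hk₀ + (-(T+x'-y-z) - 4*k₁)*hk₁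
        + (-(T-x'+y-z) - 4*k₂)*hk₂ + (-(T-x'-y+z) - 4*k₃)*hk₃ - 4*hxyz + 4*hx2
    linarith
  · linarith [hk₀, hk₁, hk₂, hk₃]
end

section
/- For any integer T, every nonnegative integer n with n ≡ T (mod 2) and 4n ≥ T² such that 4n − T² is not of the form 4^a(8b+7) admits a representation n = Σaᵥ² with Σaᵥ = T. -/
/-!
A positive definite integral ternary form of determinant one takes only sums of three squares as
values. Move a minimal vector of the form to the first basis vector and complete the square: if
`m` is the minimum, then `m q(x, w) = (m x + ℓ(w))² + q'(w)` for a binary form `q'` of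
determinant `m`, and rounding `x` gives `3 m² ≤ 4 q'(w)` for `w ≠ 0`. The same argument in two
variables gives some `w ≠ 0` with `3 q'(w)² ≤ 4 m`, so `m = 1`, the form splits off a square, and
a positive binary form of determinant one is a sum of two squares.

For `n ≢ 0, 4, 7 (mod 8)`, Dirichlet's theorem gives a prime `q` in a suitable residue class
modulo `8 n` such that `Q = q` or `Q = 2 q` satisfies `n ∣ Q + 1`, and quadratic reciprocity shows
that `-n` is a square modulo `q`, hence modulo `Q`. Writing `Q = n b - 1` and `Q c = 1 + n r²`, the
form `n x² + 2 x y + b y² + 2 r y z + c z²` has determinant `Q c - n r² = 1` and represents `n`.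
Dividing by `4` handles the remaining cases of Legendre's theorem.

Finally, if `4 n - T² = x² + y² + z²` then `x, y, z ≡ T (mod 2)`, and after changing the sign of
`x` the four numbers `(T ± x ± y ± z) / 4` with an even number of minus signs are integers; their
sum is `T` and the sum of their squares is `(4 T² + 4 (x² + y² + z²)) / 16 = n`.
-/

open Matrix ZMod

lemma Int.exists_eq_mul_isCoprime (a b : ℤ) :
    ∃ g x y, a = g * x ∧ b = g * y ∧ IsCoprime x y := by
  by_cases h : a = 0 ∧ b = 0
  · exact ⟨0, 1, 0, by simp [h.1], by simp [h.2], isCoprime_one_left⟩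
  · obtain ⟨g, x, y, -, hxy, rfl, rfl⟩ :=
      Int.exists_gcd_one' (Int.gcd_pos_iff.mpr (not_and_or.mp h))
    exact ⟨g, x, y, mul_comm _ _, mul_comm _ _, Int.isCoprime_iff_gcd_eq_one.mpr hxy⟩

/-- Take `k` to be `-s / m` rounded to the nearest integer. -/
lemma three_mul_sq_le_four_mul_of_forall {m s t : ℤ} (hm : 0 < m)
    (h : ∀ k : ℤ, m ^ 2 ≤ (m * k + s) ^ 2 + t) : 3 * m ^ 2 ≤ 4 * t := by
  have hr₀ := Int.emod_nonneg (2 * s + m) (by omega : 2 * m ≠ 0)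
  have hr₁ := Int.emod_lt_of_pos (2 * s + m) (by omega : 0 < 2 * m)
  have hdiv := Int.emod_add_mul_ediv (2 * s + m) (2 * m)
  set r := (2 * s + m) % (2 * m)
  have hk := h (-((2 * s + m) / (2 * m)))
  have : 2 * (m * -((2 * s + m) / (2 * m)) + s) = r - m := by linear_combination -hdiv
  nlinarith

lemma eq_one_of_three_mul_sq_le {m q : ℤ} (hm : 0 < m) (h₁ : 3 * m ^ 2 ≤ 4 * q)
    (h₂ : 3 * q ^ 2 ≤ 4 * m) : m = 1 := by
  have h₃ : 9 * m ^ 4 ≤ 16 * q ^ 2 := by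
    nlinarith [mul_le_mul h₁ h₁ (by positivity) (by nlinarith)]
  by_contra hne
  have h₄ : 2 ≤ m := by omega
  nlinarith [pow_le_pow_left₀ (by norm_num) h₄ 3]

namespace Matrix

lemma IsHermitian.apply_eq {ι : Type*} {G : Matrix ι ι ℤ} (hG : G.IsHermitian) (i j : ι) :
    G j i = G i j := by
  simpa using hG.apply i j

section Unimodular

variable {ι : Type*} [Fintype ι] {G : Matrix ι ι ℤ}

lemma dotProduct_mulVec_smul (G : Matrix ι ι ℤ) (d : ℤ) (v : ι → ℤ) :
    (d • v) ⬝ᵥ G *ᵥ (d • v) = d ^ 2 * (v ⬝ᵥ G *ᵥ v) := by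
  rw [mulVec_smul, smul_dotProduct, dotProduct_smul, smul_eq_mul, smul_eq_mul]; ring

lemma dotProduct_mulVec_transpose_mul_mul (G P : Matrix ι ι ℤ) (v : ι → ℤ) :
    v ⬝ᵥ (Pᵀ * G * P) *ᵥ v = (P *ᵥ v) ⬝ᵥ G *ᵥ (P *ᵥ v) := by
  rw [← mulVec_mulVec, ← mulVec_mulVec, dotProduct_mulVec, vecMul_transpose]

namespace PosDef

lemma dotProduct_mulVec_pos_int (hG : G.PosDef) {v : ι → ℤ} (hv : v ≠ 0) :
    0 < v ⬝ᵥ G *ᵥ v := by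
  simpa using hG.dotProduct_mulVec_pos hv

lemma exists_forall_dotProduct_mulVec_le [Nonempty ι] (hG : G.PosDef) :
    ∃ v ≠ 0, ∀ w ≠ 0, v ⬝ᵥ G *ᵥ v ≤ w ⬝ᵥ G *ᵥ w := by
  obtain ⟨_, ⟨v, hv, rfl⟩, hmin⟩ :=
    Int.exists_least_of_bdd (P := fun z ↦ ∃ v ≠ 0, v ⬝ᵥ G *ᵥ v = z)
      ⟨0, fun _ ⟨v, hv, hz⟩ ↦ hz ▸ (hG.dotProduct_mulVec_pos_int hv).le⟩
      ⟨_, fun _ ↦ 1, one_ne_zero, rfl⟩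
  exact ⟨v, hv, fun w hw ↦ hmin _ ⟨w, hw, rfl⟩⟩

lemma isUnit_of_forall_le_of_forall_dvd (hG : G.PosDef) {v : ι → ℤ} (hv : v ≠ 0)
    (hmin : ∀ w ≠ 0, v ⬝ᵥ G *ᵥ v ≤ w ⬝ᵥ G *ᵥ w) {d : ℤ} (hd : ∀ i, d ∣ v i) : IsUnit d := by
  choose w hw using hd
  have hvw : v = d • w := funext hw
  have hw₀ : w ≠ 0 := by rintro rfl; simp [hvw] at hv
  have hd₀ : d ≠ 0 := by rintro rfl; simp [hvw] at hv
  have hle := hmin w hw₀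
  rw [hvw, dotProduct_mulVec_smul] at hle
  have : d ^ 2 ≤ 1 := le_of_mul_le_mul_right (by linarith) (hG.dotProduct_mulVec_pos_int hw₀)
  have : -1 ≤ d ∧ d ≤ 1 := ⟨by nlinarith, by nlinarith⟩
  rw [Int.isUnit_iff]
  omega

end PosDef

variable [DecidableEq ι]

lemma transpose_mul_mul_apply_self (G P : Matrix ι ι ℤ) (i : ι) :
    (Pᵀ * G * P) i i = P.col i ⬝ᵥ G *ᵥ P.col i := by
  rw [← mulVec_single_one, ← dotProduct_mulVec_transpose_mul_mul]
  simp

lemma mulVec_ne_zero_of_det_eq_one {P : Matrix ι ι ℤ} (hP : P.det = 1) {v : ι → ℤ}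
    (hv : v ≠ 0) : P *ᵥ v ≠ 0 :=
  (mulVec_injective_of_det_ne_zero (hP ▸ one_ne_zero)).ne_iff' (mulVec_zero P) |>.mpr hv

namespace PosDef

lemma transpose_mul_mul (hG : G.PosDef) {P : Matrix ι ι ℤ} (hP : P.det = 1) :
    (Pᵀ * G * P).PosDef := by
  rw [← conjTranspose_eq_transpose_of_trivial]
  exact hG.conjTranspose_mul_mul_same (mulVec_injective_of_det_ne_zero (hP ▸ one_ne_zero))

/-- `G'` is `Pᵀ * G * P` for a unimodular `P` whose `i`-th column is a minimal vector of `G`. -/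
lemma exists_equiv_forall_le [Nonempty ι] (hG : G.PosDef) {i : ι}
    (hcol : ∀ v : ι → ℤ, (∀ d : ℤ, (∀ j, d ∣ v j) → IsUnit d) →
      ∃ P : Matrix ι ι ℤ, P.det = 1 ∧ P.col i = v) :
    ∃ G' : Matrix ι ι ℤ, G'.PosDef ∧ G'.det = G.det ∧ (∀ w ≠ 0, G' i i ≤ w ⬝ᵥ G' *ᵥ w) ∧
      (∃ v ≠ 0, v ⬝ᵥ G *ᵥ v = G' i i) ∧ ∀ v, ∃ u, v ⬝ᵥ G *ᵥ v = u ⬝ᵥ G' *ᵥ u := by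
  obtain ⟨v, hv, hmin⟩ := hG.exists_forall_dotProduct_mulVec_le
  obtain ⟨P, hP, hPv⟩ := hcol v fun d ↦ hG.isUnit_of_forall_le_of_forall_dvd hv hmin
  have hcorner : (Pᵀ * G * P) i i = v ⬝ᵥ G *ᵥ v := by rw [transpose_mul_mul_apply_self, hPv]
  refine ⟨Pᵀ * G * P, hG.transpose_mul_mul hP, by simp [hP], fun w hw ↦ ?_,
    ⟨v, hv, hcorner.symm⟩, fun u ↦ ⟨P⁻¹ *ᵥ u, ?_⟩⟩
  · rw [hcorner, dotProduct_mulVec_transpose_mul_mul]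
    exact hmin _ (mulVec_ne_zero_of_det_eq_one hP hw)
  · rw [dotProduct_mulVec_transpose_mul_mul, mulVec_mulVec, mul_nonsing_inv _ (hP ▸ isUnit_one),
      one_mulVec]

end PosDef

end Unimodular

lemma exists_det_eq_one_col_eq_fin_two (v : Fin 2 → ℤ)
    (hv : ∀ d : ℤ, (∀ i, d ∣ v i) → IsUnit d) :
    ∃ P : Matrix (Fin 2) (Fin 2) ℤ, P.det = 1 ∧ P.col 0 = v := by
  obtain ⟨a, b, hab⟩ := isRelPrime_iff_isCoprime.mp fun d h₀ h₁ ↦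
    hv d (Fin.forall_fin_two.mpr ⟨h₀, h₁⟩)
  refine ⟨!![v 0, -b; v 1, a], ?_, ?_⟩
  · rw [det_fin_two_of]; linear_combination hab
  · ext i; fin_cases i <;> rfl

lemma exists_det_eq_one_col_eq_fin_three (v : Fin 3 → ℤ)
    (hv : ∀ d : ℤ, (∀ i, d ∣ v i) → IsUnit d) :
    ∃ P : Matrix (Fin 3) (Fin 3) ℤ, P.det = 1 ∧ P.col 0 = v := by
  obtain ⟨g, x, y, hx, hy, a, b, hab⟩ := Int.exists_eq_mul_isCoprime (v 0) (v 1)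
  obtain ⟨s, t, hst⟩ : IsCoprime g (v 2) := isRelPrime_iff_isCoprime.mp fun d hg h₂ ↦ hv d <| by
    simp only [Fin.forall_fin_succ, IsEmpty.forall_iff, and_true]
    exact ⟨hx ▸ hg.mul_right x, hy ▸ hg.mul_right y, h₂⟩
  refine ⟨!![v 0, -b, -x * t; v 1, a, -y * t; v 2, 0, s], ?_, ?_⟩
  · simp only [det_fin_three, of_apply, cons_val', cons_val_zero, cons_val_one, cons_val,
      cons_val_fin_one, hx, hy]
    linear_combination hst + (s * g + t * v 2) * hab
  · ext i; fin_cases i <;> rfl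

section CornerSchur

variable {n : ℕ}

/-- `G 0 0` times the Schur complement of the entry `G 0 0`, which is integral. -/
def cornerSchur (G : Matrix (Fin (n + 1)) (Fin (n + 1)) ℤ) : Matrix (Fin n) (Fin n) ℤ :=
  G 0 0 • G.submatrix Fin.succ Fin.succ - vecMulVec (Fin.tail (G 0)) (Fin.tail (G 0))

lemma cornerSchur_apply (G : Matrix (Fin (n + 1)) (Fin (n + 1)) ℤ) (i j : Fin n) :
    G.cornerSchur i j = G 0 0 * G i.succ j.succ - G 0 i.succ * G 0 j.succ := rfl

lemma IsHermitian.cornerSchur {G : Matrix (Fin (n + 1)) (Fin (n + 1)) ℤ} (hG : G.IsHermitian) :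
    G.cornerSchur.IsHermitian := by
  rw [IsHermitian, conjTranspose_eq_transpose_of_trivial] at hG ⊢
  rw [Matrix.cornerSchur, transpose_sub, transpose_smul, transpose_vecMulVec, transpose_submatrix,
    hG]

lemma dotProduct_mulVec_cons {G : Matrix (Fin (n + 1)) (Fin (n + 1)) ℤ} (hG : G.IsHermitian)
    (x : ℤ) (w : Fin n → ℤ) :
    Fin.cons x w ⬝ᵥ G *ᵥ Fin.cons x w =
      G 0 0 * x ^ 2 + 2 * x * (Fin.tail (G 0) ⬝ᵥ w) +
        w ⬝ᵥ G.submatrix Fin.succ Fin.succ *ᵥ w := by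
  have hcross : 2 * x * (Fin.tail (G 0) ⬝ᵥ w) =
      ∑ i, w i * (G 0 i.succ * x) + ∑ i, x * (G 0 i.succ * w i) := by
    simp only [dotProduct, Finset.mul_sum, ← Finset.sum_add_distrib, Fin.tail]
    exact Finset.sum_congr rfl fun i _ ↦ by ring
  rw [hcross]
  simp only [dotProduct, mulVec, Fin.sum_univ_succ, Fin.cons_zero, Fin.cons_succ,
    hG.apply_eq 0 (Fin.succ _), Finset.mul_sum, mul_add, Finset.sum_add_distrib, submatrix_apply]
  ring

lemma dotProduct_cornerSchur_mulVec (G : Matrix (Fin (n + 1)) (Fin (n + 1)) ℤ) (w : Fin n → ℤ) :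
    w ⬝ᵥ G.cornerSchur *ᵥ w =
      G 0 0 * (w ⬝ᵥ G.submatrix Fin.succ Fin.succ *ᵥ w) - (Fin.tail (G 0) ⬝ᵥ w) ^ 2 := by
  rw [cornerSchur, sub_mulVec, smul_mulVec, vecMulVec_mulVec, dotProduct_sub, dotProduct_smul,
    dotProduct_smul, op_smul_eq_mul, smul_eq_mul, dotProduct_comm w (Fin.tail (G 0)), sq]

lemma mul_dotProduct_mulVec_cons {G : Matrix (Fin (n + 1)) (Fin (n + 1)) ℤ}
    (hG : G.IsHermitian) (x : ℤ) (w : Fin n → ℤ) :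
    G 0 0 * (Fin.cons x w ⬝ᵥ G *ᵥ Fin.cons x w) =
      (G 0 0 * x + Fin.tail (G 0) ⬝ᵥ w) ^ 2 + w ⬝ᵥ G.cornerSchur *ᵥ w := by
  rw [dotProduct_mulVec_cons hG, dotProduct_cornerSchur_mulVec]; ring

lemma dotProduct_cornerSchur_mulVec_fin_two {G : Matrix (Fin 2) (Fin 2) ℤ} (hG : G.IsHermitian)
    (w : Fin 1 → ℤ) : w ⬝ᵥ G.cornerSchur *ᵥ w = G.det * w 0 ^ 2 := by
  simp only [dotProduct, mulVec, Finset.univ_unique, Fin.default_eq_zero, Finset.sum_singleton,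
    cornerSchur_apply, Fin.succ_zero_eq_one, det_fin_two, hG.apply_eq 0 1]
  ring

lemma det_cornerSchur_fin_three {G : Matrix (Fin 3) (Fin 3) ℤ} (hG : G.IsHermitian) :
    G.cornerSchur.det = G 0 0 * G.det := by
  simp only [det_fin_two, det_fin_three, cornerSchur_apply, Fin.succ_zero_eq_one,
    Fin.succ_one_eq_two, hG.apply_eq 0 1, hG.apply_eq 0 2, hG.apply_eq 1 2]
  ring

namespace PosDef

variable {G : Matrix (Fin (n + 1)) (Fin (n + 1)) ℤ}

lemma cornerSchur (hG : G.PosDef) : G.cornerSchur.PosDef := by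
  refine of_dotProduct_mulVec_pos hG.isHermitian.cornerSchur fun w hw ↦ ?_
  have hm : 0 < G 0 0 := hG.diag_pos
  have hne : (Fin.cons (-(Fin.tail (G 0) ⬝ᵥ w)) (G 0 0 • w) : Fin (n + 1) → ℤ) ≠ 0 :=
    cons_nonzero_iff.mpr (.inr (smul_ne_zero hm.ne' hw))
  have key := mul_dotProduct_mulVec_cons hG.isHermitian (-(Fin.tail (G 0) ⬝ᵥ w)) (G 0 0 • w)
  rw [dotProduct_smul, smul_eq_mul, dotProduct_mulVec_smul] at key
  have := mul_pos hm (hG.dotProduct_mulVec_pos_int hne)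
  rw [star_trivial]
  nlinarith

lemma three_mul_sq_le_four_mul_cornerSchur (hG : G.PosDef)
    (hmin : ∀ v ≠ 0, G 0 0 ≤ v ⬝ᵥ G *ᵥ v) {w : Fin n → ℤ} (hw : w ≠ 0) :
    3 * G 0 0 ^ 2 ≤ 4 * (w ⬝ᵥ G.cornerSchur *ᵥ w) := by
  refine three_mul_sq_le_four_mul_of_forall (s := Fin.tail (G 0) ⬝ᵥ w) hG.diag_pos fun k ↦ ?_
  have hne : (Fin.cons k w : Fin (n + 1) → ℤ) ≠ 0 := cons_nonzero_iff.mpr (.inr hw)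
  rw [← mul_dotProduct_mulVec_cons hG.isHermitian, sq]
  exact mul_le_mul_of_nonneg_left (hmin _ hne) hG.diag_pos.le

end PosDef

end CornerSchur

namespace PosDef

lemma exists_three_mul_sq_le_four_mul_det {G : Matrix (Fin 2) (Fin 2) ℤ} (hG : G.PosDef) :
    ∃ v ≠ 0, 3 * (v ⬝ᵥ G *ᵥ v) ^ 2 ≤ 4 * G.det := by
  obtain ⟨G', hG', hdet, hmin, ⟨v, hv, hval⟩, -⟩ :=
    hG.exists_equiv_forall_le exists_det_eq_one_col_eq_fin_two
  have := hG'.three_mul_sq_le_four_mul_cornerSchur hmin (w := ![1]) (by simp)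
  rw [dotProduct_cornerSchur_mulVec_fin_two hG'.isHermitian, hdet, ← hval] at this
  exact ⟨v, hv, by simpa using this⟩

lemma exists_sq_add_sq {G : Matrix (Fin 2) (Fin 2) ℤ} (hG : G.PosDef) (hdet : G.det = 1)
    (v : Fin 2 → ℤ) : ∃ y z, v ⬝ᵥ G *ᵥ v = y ^ 2 + z ^ 2 := by
  obtain ⟨G', hG', hdet', hmin, -, hval⟩ :=
    hG.exists_equiv_forall_le exists_det_eq_one_col_eq_fin_two
  rw [hdet] at hdet'
  have hbound := hG'.three_mul_sq_le_four_mul_cornerSchur hmin (w := ![1]) (by simp)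
  rw [dotProduct_cornerSchur_mulVec_fin_two hG'.isHermitian, hdet'] at hbound
  have hcorner : G' 0 0 = 1 := by
    have := hG'.diag_pos (i := 0)
    simp only [cons_val_fin_one, one_pow, mul_one] at hbound
    nlinarith
  obtain ⟨u, hu⟩ := hval v
  have := mul_dotProduct_mulVec_cons hG'.isHermitian (u 0) (Fin.tail u)
  rw [Fin.cons_self_tail, dotProduct_cornerSchur_mulVec_fin_two hG'.isHermitian, hdet',
    hcorner, one_mul, one_mul, one_mul] at this
  exact ⟨_, _, hu.trans this⟩

lemma exists_sq_add_sq_add_sq {G : Matrix (Fin 3) (Fin 3) ℤ} (hG : G.PosDef) (hdet : G.det = 1)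
    (v : Fin 3 → ℤ) : ∃ x y z, v ⬝ᵥ G *ᵥ v = x ^ 2 + y ^ 2 + z ^ 2 := by
  obtain ⟨G', hG', hdet', hmin, -, hval⟩ :=
    hG.exists_equiv_forall_le exists_det_eq_one_col_eq_fin_three
  rw [hdet] at hdet'
  have hschur := det_cornerSchur_fin_three hG'.isHermitian
  rw [hdet', mul_one] at hschur
  obtain ⟨w, hw, hw'⟩ := hG'.cornerSchur.exists_three_mul_sq_le_four_mul_det
  rw [hschur] at hw'
  have hcorner : G' 0 0 = 1 :=
    eq_one_of_three_mul_sq_le hG'.diag_pos (hG'.three_mul_sq_le_four_mul_cornerSchur hmin hw) hw'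
  obtain ⟨u, hu⟩ := hval v
  obtain ⟨y, z, hyz⟩ := hG'.cornerSchur.exists_sq_add_sq (by rw [hschur, hcorner]) (Fin.tail u)
  have := mul_dotProduct_mulVec_cons hG'.isHermitian (u 0) (Fin.tail u)
  rw [Fin.cons_self_tail, hcorner, hyz, one_mul, one_mul] at this
  exact ⟨_, y, z, by rw [hu, this, add_assoc]⟩

end PosDef

end Matrix

/-- With `q = n b - 1`, the form `n x² + 2 x y + b y² + 2 r y z + c z²` times `n q` is
`q (n x + y)² + (q y + n r z)² + n z²`. -/
theorem exists_sq_add_sq_add_sq_of_mul_sub_one {n b c r : ℤ} (hn : 0 < n) (hq : 0 < n * b - 1)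
    (h : (n * b - 1) * c = 1 + n * r ^ 2) : ∃ x y z : ℤ, x ^ 2 + y ^ 2 + z ^ 2 = n := by
  set q := n * b - 1 with hq_def
  let G : Matrix (Fin 3) (Fin 3) ℤ := !![n, 1, 0; 1, b, r; 0, r, c]
  have hdet : G.det = 1 := by
    simp only [G, det_fin_three, of_apply, cons_val', cons_val_zero, cons_val_one, cons_val,
      cons_val_fin_one]
    linear_combination h
  have hval (v : Fin 3 → ℤ) : n * q * (v ⬝ᵥ G *ᵥ v) =
      q * (n * v 0 + v 1) ^ 2 + (q * v 1 + n * r * v 2) ^ 2 + n * v 2 ^ 2 := by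
    simp only [G, dotProduct, mulVec, Fin.sum_univ_three, of_apply, cons_val', cons_val_fin_one,
      cons_val_zero, cons_val_one, cons_val]
    linear_combination (n * v 1 ^ 2) * hq_def + (n * v 2 ^ 2) * h
  have hG : G.PosDef := by
    refine .of_dotProduct_mulVec_pos ?_ fun v hv ↦ ?_
    · ext i j; fin_cases i <;> fin_cases j <;> rfl
    have hpos : 0 < q * (n * v 0 + v 1) ^ 2 + (q * v 1 + n * r * v 2) ^ 2 + n * v 2 ^ 2 := by
      by_cases h₂ : v 2 = 0
      · by_cases h₁ : v 1 = 0
        · have h₀ : v 0 ≠ 0 := fun h₀ ↦ hv (by ext i; fin_cases i <;> assumption)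
          have : 0 < q * (n * v 0) ^ 2 := by positivity
          simpa [h₁, h₂] using this
        · have : 0 < (q * v 1) ^ 2 := by positivity
          have : 0 ≤ q * (n * v 0 + v 1) ^ 2 := by positivity
          simp only [h₂]
          nlinarith
      · positivity
    rw [star_trivial]
    nlinarith [hval v, mul_pos hn hq]
  obtain ⟨x, y, z, hxyz⟩ := hG.exists_sq_add_sq_add_sq hdet ![1, 0, 0]
  exact ⟨x, y, z, by rw [← hxyz]; simp [G, dotProduct, mulVec, Fin.sum_univ_three]⟩

lemma exists_dvd_one_add_mul_sq {n : ℤ} {q : ℕ} [Fact q.Prime] (hqn : ¬(q : ℤ) ∣ n)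
    (hJ : jacobiSym (-n) q = 1) : ∃ r : ℤ, (q : ℤ) ∣ 1 + n * r ^ 2 := by
  obtain ⟨ρ, hρ⟩ := ZMod.isSquare_of_jacobiSym_eq_one hJ
  have hn : (n : ZMod q) ≠ 0 := by rwa [Ne, ZMod.intCast_zmod_eq_zero_iff_dvd]
  obtain ⟨r, hr⟩ := ZMod.intCast_surjective (ρ / (n : ZMod q))
  refine ⟨r, (ZMod.intCast_zmod_eq_zero_iff_dvd _ _).mp ?_⟩
  push_cast at hρ ⊢
  rw [hr, div_pow, sq, ← hρ]
  field_simp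
  ring

lemma not_dvd_of_dvd_mul_add_one {q : ℕ} (hq : q.Prime) {n k : ℤ} (h : n ∣ k * q + 1) :
    ¬(q : ℤ) ∣ n := fun hqn ↦ hq.not_dvd_one <| Int.natCast_dvd_natCast.mp <|
  (Int.dvd_add_right (dvd_mul_left _ _)).mp (hqn.trans h)

theorem exists_sq_add_sq_add_sq_of_prime {n q : ℕ} (hn : 0 < n) (hq : q.Prime)
    (hqn : (q : ℤ) ≡ -1 [ZMOD n]) (hJ : jacobiSym (-n) q = 1) :
    ∃ x y z : ℤ, x ^ 2 + y ^ 2 + z ^ 2 = n := by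
  have := Fact.mk hq
  obtain ⟨b, hb⟩ : (n : ℤ) ∣ 1 * q + 1 := by simpa using Int.modEq_iff_dvd.mp hqn.symm
  obtain ⟨r, c, hc⟩ := exists_dvd_one_add_mul_sq (not_dvd_of_dvd_mul_add_one hq ⟨b, hb⟩) hJ
  have hq₀ : (0 : ℤ) < q := by exact_mod_cast hq.pos
  exact exists_sq_add_sq_add_sq_of_mul_sub_one (b := b) (c := c) (r := r) (by exact_mod_cast hn)
    (by linarith) (by linear_combination -c * hb - hc)

theorem exists_sq_add_sq_add_sq_of_two_mul_prime {n q : ℕ} (hn : Odd n) (hq : q.Prime)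
    (hq₂ : Odd q) (hqn : 2 * (q : ℤ) ≡ -1 [ZMOD n]) (hJ : jacobiSym (-n) q = 1) :
    ∃ x y z : ℤ, x ^ 2 + y ^ 2 + z ^ 2 = n := by
  have := Fact.mk hq
  obtain ⟨b, hb⟩ : (n : ℤ) ∣ 2 * q + 1 := by simpa using Int.modEq_iff_dvd.mp hqn.symm
  obtain ⟨r, c, hc⟩ := exists_dvd_one_add_mul_sq (not_dvd_of_dvd_mul_add_one hq ⟨b, hb⟩) hJ
  -- `r' ≡ r (mod q)` and `r'` is odd, so `2 q ∣ 1 + n r'²`.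
  set r' := (q + 1) * r + q
  have hr' : Odd r' := ((hq₂.natCast.add_one).mul_right r).add_odd hq₂.natCast
  have hqr' : (q : ℤ) ∣ 1 + n * r' ^ 2 :=
    ⟨c + n * (2 * r * (r + 1) + q * (r + 1) ^ 2), by linear_combination hc⟩
  have h2r' : (2 : ℤ) ∣ 1 + n * r' ^ 2 := by
    rw [← even_iff_two_dvd, add_comm]
    exact (hn.natCast.mul hr'.pow).add_one
  obtain ⟨c', hc'⟩ := (Int.isCoprime_two_left.mpr hq₂.natCast).mul_dvd h2r' hqr'
  have hq₀ : (0 : ℤ) < q := by exact_mod_cast hq.pos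
  exact exists_sq_add_sq_add_sq_of_mul_sub_one (b := b) (c := c') (r := r')
    (by exact_mod_cast hn.pos) (by linarith) (by linear_combination -c' * hb - hc')

namespace Nat

theorem exists_sq_add_sq_add_sq_of_mod_four_eq_one {n : ℕ} (hn : n % 4 = 1) :
    ∃ x y z : ℤ, x ^ 2 + y ^ 2 + z ^ 2 = n := by
  obtain ⟨q, -, hq, hqa⟩ := forall_exists_prime_gt_and_zmodEq 0 (q := 4 * n) (a := 2 * n - 1)
    (by omega) ⟨-(2 * n + 1), n, by push_cast; ring⟩
  push_cast at hqa
  have hq4 : q % 4 = 1 := by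
    have := hqa.of_dvd (dvd_mul_right 4 (n : ℤ))
    unfold Int.ModEq at this; omega
  have hqn : (q : ℤ) ≡ -1 [ZMOD n] :=
    (hqa.of_dvd (dvd_mul_left _ 4)).trans (Int.modEq_iff_dvd.mpr ⟨-2, by ring⟩)
  have hn₂ : Odd n := odd_iff.mpr (by omega)
  refine exists_sq_add_sq_add_sq_of_prime (by omega) hq hqn ?_
  rw [jacobiSym.neg _ (odd_iff.mpr (by omega)), χ₄_nat_one_mod_four hq4, one_mul,
    jacobiSym.quadratic_reciprocity_one_mod_four' hn₂ hq4, jacobiSym.mod_left' hqn,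
    jacobiSym.at_neg_one hn₂, χ₄_nat_one_mod_four hn]

theorem exists_sq_add_sq_add_sq_of_mod_eight_eq_three {n : ℕ} (hn : n % 8 = 3) :
    ∃ x y z : ℤ, x ^ 2 + y ^ 2 + z ^ 2 = n := by
  obtain ⟨m, hm⟩ : ∃ m : ℤ, (n : ℤ) = 8 * m + 3 := ⟨n / 8, by omega⟩
  obtain ⟨q, -, hq, hqa⟩ := forall_exists_prime_gt_and_zmodEq 0 (q := 4 * n) (a := 4 * m + 1)
    (by omega) <| by
      push_cast
      exact IsCoprime.mul_right ⟨1, -m, by ring⟩ ⟨4 * (4 * m + 1), -(8 * m + 1), by rw [hm]; ring⟩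
  push_cast at hqa
  have hq4 : q % 4 = 1 := by
    have := hqa.of_dvd (dvd_mul_right 4 (n : ℤ))
    unfold Int.ModEq at this; omega
  have h2qn : 2 * (q : ℤ) ≡ -1 [ZMOD n] :=
    ((hqa.of_dvd (dvd_mul_left _ 4)).mul_left 2).trans
      (Int.modEq_iff_dvd.mpr ⟨-1, by rw [hm]; ring⟩)
  have hn₂ : Odd n := odd_iff.mpr (by omega)
  have hqn : jacobiSym q n = 1 := by
    have := jacobiSym.mul_left 2 q n
    rw [jacobiSym.mod_left' h2qn, jacobiSym.at_neg_one hn₂, χ₄_nat_three_mod_four (by omega),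
      jacobiSym.at_two hn₂, χ₈_nat_mod_eight, hn, show χ₈ (3 : ℕ) = -1 from rfl] at this
    linarith
  refine exists_sq_add_sq_add_sq_of_two_mul_prime hn₂ hq (odd_iff.mpr (by omega)) h2qn ?_
  rw [jacobiSym.neg _ (odd_iff.mpr (by omega)), χ₄_nat_one_mod_four hq4, one_mul,
    jacobiSym.quadratic_reciprocity_one_mod_four' hn₂ hq4, hqn]

theorem exists_sq_add_sq_add_sq_of_mod_eight_eq_two {n : ℕ} (hn : n % 8 = 2) :
    ∃ x y z : ℤ, x ^ 2 + y ^ 2 + z ^ 2 = n := by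
  obtain ⟨k, rfl⟩ : ∃ k, n = 2 * k := ⟨n / 2, by omega⟩
  obtain ⟨u, hu⟩ : ∃ u : ℤ, (k : ℤ) = 4 * u + 1 := ⟨k / 4, by omega⟩
  obtain ⟨q, -, hq, hqa⟩ := forall_exists_prime_gt_and_zmodEq 0 (q := 8 * k)
    (a := 2 * k ^ 2 - 1) (by omega) <| by
      have h8 : IsCoprime (2 * (k : ℤ) ^ 2 - 1) (2 ^ 3) :=
        (Int.isCoprime_two_right.mpr ⟨k ^ 2 - 1, by ring⟩).pow_right
      push_cast
      exact IsCoprime.mul_right (by simpa using h8) ⟨-1, 2 * k, by ring⟩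
  push_cast at hqa
  have hq8 : q % 8 = 1 := by
    have := hqa.of_dvd (dvd_mul_right 8 (k : ℤ))
    have h : 2 * (k : ℤ) ^ 2 - 1 = 8 * (4 * u ^ 2 + 2 * u) + 1 := by rw [hu]; ring
    unfold Int.ModEq at this; omega
  have hqn : (q : ℤ) ≡ -1 [ZMOD (2 * k : ℕ)] := by
    push_cast
    exact (hqa.of_dvd ⟨4, by ring⟩).trans (Int.modEq_iff_dvd.mpr ⟨-k, by ring⟩)
  have hqk : (q : ℤ) ≡ -1 [ZMOD k] := hqn.of_dvd ⟨2, by push_cast; ring⟩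
  have hk₂ : Odd k := odd_iff.mpr (by omega)
  have hq₂ : Odd q := odd_iff.mpr (by omega)
  have hq4 : q % 4 = 1 := by omega
  refine exists_sq_add_sq_add_sq_of_prime (by omega) hq hqn ?_
  push_cast
  rw [jacobiSym.neg _ hq₂, jacobiSym.mul_left, jacobiSym.at_two hq₂, χ₄_nat_one_mod_four hq4,
    χ₈_nat_mod_eight, hq8, show χ₈ (1 : ℕ) = 1 from rfl,
    jacobiSym.quadratic_reciprocity_one_mod_four' hk₂ hq4, jacobiSym.mod_left' hqk,
    jacobiSym.at_neg_one hk₂, χ₄_nat_one_mod_four (by omega)]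
  norm_num

theorem exists_sq_add_sq_add_sq_of_mod_eight_eq_six {n : ℕ} (hn : n % 8 = 6) :
    ∃ x y z : ℤ, x ^ 2 + y ^ 2 + z ^ 2 = n := by
  obtain ⟨k, rfl⟩ : ∃ k, n = 2 * k := ⟨n / 2, by omega⟩
  obtain ⟨q, -, hq, hqa⟩ := forall_exists_prime_gt_and_zmodEq 0 (q := 8 * k) (a := 4 * k - 1)
    (by omega) <| by
      have h8 : IsCoprime (4 * (k : ℤ) - 1) (2 ^ 3) :=
        (Int.isCoprime_two_right.mpr ⟨2 * k - 1, by ring⟩).pow_right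
      push_cast
      exact IsCoprime.mul_right (by simpa using h8) ⟨-1, 4, by ring⟩
  push_cast at hqa
  have hq8 : q % 8 = 3 := by
    have := hqa.of_dvd (dvd_mul_right 8 (k : ℤ))
    unfold Int.ModEq at this; omega
  have hqn : (q : ℤ) ≡ -1 [ZMOD (2 * k : ℕ)] := by
    push_cast
    exact (hqa.of_dvd ⟨4, by ring⟩).trans (Int.modEq_iff_dvd.mpr ⟨-2, by ring⟩)
  have hqk : (q : ℤ) ≡ -1 [ZMOD k] := hqn.of_dvd ⟨2, by push_cast; ring⟩
  have hk₂ : Odd k := odd_iff.mpr (by omega)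
  have hq₂ : Odd q := odd_iff.mpr (by omega)
  refine exists_sq_add_sq_add_sq_of_prime (by omega) hq hqn ?_
  push_cast
  rw [jacobiSym.neg _ hq₂, jacobiSym.mul_left, jacobiSym.at_two hq₂,
    χ₄_nat_three_mod_four (by omega), χ₈_nat_mod_eight, hq8, show χ₈ (3 : ℕ) = -1 from rfl,
    jacobiSym.quadratic_reciprocity_three_mod_four (by omega) (by omega),
    jacobiSym.mod_left' hqk, jacobiSym.at_neg_one hk₂, χ₄_nat_three_mod_four (by omega)]
  norm_num

theorem sum_three_squares {m : ℕ} (h : ¬∃ a b : ℕ, m = 4 ^ a * (8 * b + 7)) :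
    ∃ x y z : ℤ, x ^ 2 + y ^ 2 + z ^ 2 = m := by
  induction m using Nat.strong_induction_on with
  | _ m ih =>
  by_cases h₄ : 4 ∣ m
  · obtain ⟨k, rfl⟩ := h₄
    rcases Nat.eq_zero_or_pos k with rfl | hk
    · exact ⟨0, 0, 0, by simp⟩
    obtain ⟨x, y, z, hxyz⟩ :=
      ih k (by omega) fun ⟨a, b, hab⟩ ↦ h ⟨a + 1, b, by rw [hab]; ring⟩
    exact ⟨2 * x, 2 * y, 2 * z, by push_cast; linear_combination 4 * hxyz⟩
  have h₇ : m % 8 ≠ 7 := fun h₇ ↦ h ⟨0, m / 8, by omega⟩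
  rcases (by omega : m % 4 = 1 ∨ m % 8 = 2 ∨ m % 8 = 3 ∨ m % 8 = 6) with h | h | h | h
  · exact exists_sq_add_sq_add_sq_of_mod_four_eq_one h
  · exact exists_sq_add_sq_add_sq_of_mod_eight_eq_two h
  · exact exists_sq_add_sq_add_sq_of_mod_eight_eq_three h
  · exact exists_sq_add_sq_add_sq_of_mod_eight_eq_six h

end Nat

lemma Int.sq_emod_eight (u : ℤ) :
    u % 4 = 0 ∧ u ^ 2 % 8 = 0 ∨ u % 4 = 2 ∧ u ^ 2 % 8 = 4 ∨ u % 2 = 1 ∧ u ^ 2 % 8 = 1 := by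
  obtain ⟨k, r, hr₀, hr₁, rfl⟩ : ∃ k r, 0 ≤ r ∧ r < 4 ∧ u = 4 * k + r :=
    ⟨u / 4, u % 4, by omega, by omega, by omega⟩
  have h : (4 * k + r) ^ 2 = 8 * (2 * k ^ 2 + k * r) + r ^ 2 := by ring
  interval_cases r <;> omega

lemma exists_sum_four_sq_of_dvd {T n x y z : ℤ} (h : x ^ 2 + y ^ 2 + z ^ 2 = 4 * n - T ^ 2)
    (h₄ : 4 ∣ T + x + y + z) (hxy : 2 ∣ x + y) (hyz : 2 ∣ y + z) :
    ∃ a₀ a₁ a₂ a₃ : ℤ, a₀ ^ 2 + a₁ ^ 2 + a₂ ^ 2 + a₃ ^ 2 = n ∧ a₀ + a₁ + a₂ + a₃ = T := by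
  obtain ⟨a, ha⟩ := h₄
  obtain ⟨s, hs⟩ := hyz
  obtain ⟨t, ht⟩ := hxy
  refine ⟨a, a - s, a - s - t + y, a - t, ?_, by linarith⟩
  obtain rfl : z = 2 * s - y := by linarith
  obtain rfl : x = 2 * t - y := by linarith
  obtain rfl : T = 4 * a - 2 * t - 2 * s + y := by linarith
  linarith

lemma exists_sum_four_sq_of_sum_three_sq {T n x y z : ℤ} (hpar : n ≡ T [ZMOD 2])
    (h : x ^ 2 + y ^ 2 + z ^ 2 = 4 * n - T ^ 2) :
    ∃ a₀ a₁ a₂ a₃ : ℤ, a₀ ^ 2 + a₁ ^ 2 + a₂ ^ 2 + a₃ ^ 2 = n ∧ a₀ + a₁ + a₂ + a₃ = T := by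
  have := Int.sq_emod_eight T
  have := Int.sq_emod_eight x
  have := Int.sq_emod_eight y
  have := Int.sq_emod_eight z
  unfold Int.ModEq at hpar
  have hxy : 2 ∣ x + y := by omega
  have hyz : 2 ∣ y + z := by omega
  by_cases h₄ : 4 ∣ T + x + y + z
  · exact exists_sum_four_sq_of_dvd h h₄ hxy hyz
  · exact exists_sum_four_sq_of_dvd (x := -x) (by rw [neg_sq]; exact h) (by omega) (by omega) hyz

theorem stmt_14_general (T n : ℤ) (hpar : n ≡ T [ZMOD 2]) (hge : T^2 ≤ 4 * n)
    (hform : ¬ ∃ a b : ℕ, 4 * n - T^2 = 4^a * (8 * b + 7)) :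
    ∃ a₀ a₁ a₂ a₃ : ℤ, a₀^2 + a₁^2 + a₂^2 + a₃^2 = n ∧ a₀ + a₁ + a₂ + a₃ = T := by
  lift 4 * n - T ^ 2 to ℕ using (by linarith) with m hm
  obtain ⟨x, y, z, hxyz⟩ := Nat.sum_three_squares (m := m) fun ⟨a, b, hab⟩ ↦
    hform ⟨a, b, by rw [hab]; push_cast; ring⟩
  exact exists_sum_four_sq_of_sum_three_sq hpar (hxyz.trans hm)

theorem stmt_14 (T n : ℤ) (hn : 0 ≤ n) (hpar : n ≡ T [ZMOD 2]) (hge : T^2 ≤ 4 * n)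
    (hform : ¬ ∃ a b : ℕ, 4 * n - T^2 = 4^a * (8 * b + 7)) :
    ∃ a₀ a₁ a₂ a₃ : ℤ, a₀^2 + a₁^2 + a₂^2 + a₃^2 = n ∧ a₀ + a₁ + a₂ + a₃ = T :=
  stmt_14_general T n hpar hge hform
end
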